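/- arXiv:1402.4790 — 3 statements merged into one kernel-verified Lean document; each statement's English description precedes it below -/
import Mathlib

section
/- Let D be a division ring and n, p, q be positive integers with n ≤ p and n ≤ q. Let P = [[I_n, 0],[0, 0]] ∈ M_{p×q}(D). Then the rank n−1 matrices of M_{p×q}(D) that are adjacent to P are exactly the matrices of the form Q = [[Q₁, 0],[0, 0]], where Q₁ ∈ M_n(D) is an idempotent matrix of rank n−1. -/
open Matrix

variable {D : Type*} [DivisionRing D]

/-- The rank of a matrix over a division ring: the dimension of its row space,
i.e. of the left `D`-subspace of `D^n` spanned by the rows. -/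
noncomputable def rowRank {m n : ℕ} (A : Matrix (Fin m) (Fin n) D) : ℕ :=
  Module.finrank D (Submodule.span D (Set.range fun i => A i))

/-- Two matrices are adjacent if their difference has rank one. -/
def Adjacent {m n : ℕ} (A B : Matrix (Fin m) (Fin n) D) : Prop :=
  rowRank (A - B) = 1

/-- `R(x)`: the set of matrices of the form `ᵗu x` for a fixed row vector `x`. -/
def Rvec {m n : ℕ} (x : Fin n → D) : Set (Matrix (Fin m) (Fin n) D) :=
  { M | ∃ u : Fin m → D, ∀ i j, M i j = u i * x j }

/-- `L(ᵗy)`: the set of matrices of the form `ᵗy v` for a fixed column vector `ᵗy`. -/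
def Lvec {m n : ℕ} (y : Fin m → D) : Set (Matrix (Fin m) (Fin n) D) :=
  { M | ∃ v : Fin n → D, ∀ i j, M i j = y i * v j }

/-- `R_d`: the matrices whose row space is contained in `d`. -/
def Rsub {m n : ℕ} (d : Submodule D (Fin n → D)) : Set (Matrix (Fin m) (Fin n) D) :=
  { M | ∀ i, M i ∈ d }

/-- `L_e`: the matrices whose column space (a right subspace, i.e. a `Dᵐᵒᵖ`-submodule)
is contained in `e`. -/
def Lsub {m n : ℕ} (e : Submodule Dᵐᵒᵖ (Fin m → D)) : Set (Matrix (Fin m) (Fin n) D) :=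
  { M | ∀ j, (fun i => M i j) ∈ e }

/-- The orthogonal set of a set `e` of column vectors. -/
def perpSet {m : ℕ} (e : Set (Fin m → D)) : Set (Fin m → D) :=
  { u | ∀ v ∈ e, ∑ i, u i * v i = 0 }

/-- The `p × q` matrix with upper-left block `B` and zeros elsewhere. -/
def pad {m n : ℕ} (p q : ℕ) (B : Matrix (Fin m) (Fin n) D) :
    Matrix (Fin p) (Fin q) D :=
  Matrix.of fun i j =>
    if hi : (i : ℕ) < m then if hj : (j : ℕ) < n then B ⟨i, hi⟩ ⟨j, hj⟩ else 0 else 0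

/-- `φ` is degenerate with respect to `A`. -/
def DegenerateAt {m n p q : ℕ} (φ : Matrix (Fin m) (Fin n) D → Matrix (Fin p) (Fin q) D)
    (A : Matrix (Fin m) (Fin n) D) : Prop :=
  ∃ x : Fin p → D, x ≠ 0 ∧ ∃ y : Fin q → D, y ≠ 0 ∧
    ∀ M : Matrix (Fin m) (Fin n) D, rowRank M ≤ 1 →
      φ (A + M) - φ A ∈ Rvec y ∪ Lvec x

/-- `φ` is degenerate: degenerate with respect to every matrix. -/
def Degenerate {m n p q : ℕ} (φ : Matrix (Fin m) (Fin n) D → Matrix (Fin p) (Fin q) D) :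
    Prop :=
  ∀ A, DegenerateAt φ A

/-- A map (sending `0` to `0`) is degenerate with respect to `0` iff it maps every matrix of
rank at most one into `R(y) ∪ L(ᵗx)` for some nonzero `y`, `x`. -/
def DegZero {m n p q : ℕ} (φ : Matrix (Fin m) (Fin n) D → Matrix (Fin p) (Fin q) D) :
    Prop :=
  ∃ x : Fin p → D, x ≠ 0 ∧ ∃ y : Fin q → D, y ≠ 0 ∧
    ∀ M : Matrix (Fin m) (Fin n) D, rowRank M ≤ 1 → φ M ∈ Rvec y ∪ Lvec x

/-- A standard adjacency preserver. -/
def Standard {m n p q : ℕ} (φ : Matrix (Fin m) (Fin n) D → Matrix (Fin p) (Fin q) D) :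
    Prop :=
  (m ≤ p ∧ n ≤ q ∧ ∃ τ : D ≃+* D, ∃ T : Matrix (Fin p) (Fin p) D,
    ∃ S : Matrix (Fin q) (Fin q) D, ∃ R : Matrix (Fin p) (Fin q) D,
    IsUnit T ∧ IsUnit S ∧ ∀ A, φ A = T * pad p q (A.map τ) * S + R) ∨
  (n ≤ p ∧ m ≤ q ∧ ∃ σ : D → D, Function.Bijective σ ∧ σ 1 = 1 ∧
    (∀ a b, σ (a + b) = σ a + σ b) ∧ (∀ a b, σ (a * b) = σ b * σ a) ∧
    ∃ T : Matrix (Fin p) (Fin p) D, ∃ S : Matrix (Fin q) (Fin q) D,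
    ∃ R : Matrix (Fin p) (Fin q) D, IsUnit T ∧ IsUnit S ∧
    ∀ A, φ A = T * pad p q (A.map σ).transpose * S + R)

/-- A division ring is EAS if every (unital) ring endomorphism of it is surjective. -/
def EAS (D : Type*) [DivisionRing D] : Prop :=
  ∀ f : D →+* D, Function.Surjective f

/-- A set of matrices is adjacent if any two distinct members are adjacent. -/
def IsAdjacentSet {m n : ℕ} (S : Set (Matrix (Fin m) (Fin n) D)) : Prop :=
  ∀ A ∈ S, ∀ B ∈ S, A ≠ B → Adjacent A B

section Aux

open Module Submodule

lemma rowRank_eq_finrank_range {m n : ℕ} (A : Matrix (Fin m) (Fin n) D) :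
    rowRank A = Module.finrank D (LinearMap.range A.vecMulLinear) := by
  rw [range_vecMulLinear]; rfl

lemma exists_vec_of_rowRank_one {m n : ℕ} {A : Matrix (Fin m) (Fin n) D}
    (h : rowRank A = 1) :
    ∃ x : Fin n → D, x ≠ 0 ∧ ∃ u : Fin m → D, ∀ i, A i = u i • x := by
  unfold rowRank at h
  obtain ⟨v, hv0, hv⟩ := finrank_eq_one_iff'.mp h
  refine ⟨(v : Fin n → D), by simpa using hv0, ?_⟩
  have hrow : ∀ i, A i ∈ Submodule.span D (Set.range fun i => A i) :=
    fun i => Submodule.subset_span ⟨i, rfl⟩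
  choose u hu using fun i => hv ⟨A i, hrow i⟩
  refine ⟨u, fun i => ?_⟩
  have := congrArg Subtype.val (hu i)
  simpa using this.symm

def padVecL (n q : ℕ) : (Fin n → D) →ₗ[D] (Fin q → D) where
  toFun v := fun j => if hj : (j : ℕ) < n then v ⟨j, hj⟩ else 0
  map_add' v w := by funext j; by_cases hj : (j : ℕ) < n <;> simp [hj]
  map_smul' c v := by funext j; by_cases hj : (j : ℕ) < n <;> simp [hj]

lemma padVecL_injective {n q : ℕ} (h : n ≤ q) :
    Function.Injective (padVecL (D := D) n q) := by
  intro v w hvw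
  funext j
  have := congrFun hvw (Fin.castLE h j)
  simpa [padVecL, j.isLt] using this

lemma pad_row {m n p q : ℕ} (B : Matrix (Fin m) (Fin n) D) (i : Fin p) :
    pad p q B i = if hi : (i : ℕ) < m then padVecL n q (B ⟨i, hi⟩) else 0 := by
  funext j
  by_cases hi : (i : ℕ) < m <;> simp [pad, padVecL, hi]

lemma span_range_pad {m n p q : ℕ} (hmp : m ≤ p) (B : Matrix (Fin m) (Fin n) D) :
    Submodule.span D (Set.range fun i => pad (D := D) p q B i)
      = Submodule.map (padVecL n q)
          (Submodule.span D (Set.range fun i => B i)) := by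
  rw [Submodule.map_span]
  apply le_antisymm
  · rw [Submodule.span_le]
    rintro _ ⟨i, rfl⟩
    show pad p q B i ∈ _
    rw [pad_row]
    by_cases hi : (i : ℕ) < m
    · rw [dif_pos hi]
      exact Submodule.subset_span ⟨B ⟨i, hi⟩, ⟨⟨i, hi⟩, rfl⟩, rfl⟩
    · rw [dif_neg hi]; exact Submodule.zero_mem _
  · rw [Submodule.span_le]
    rintro _ ⟨_, ⟨k, rfl⟩, rfl⟩
    apply Submodule.subset_span
    refine ⟨Fin.castLE hmp k, ?_⟩
    show pad p q B (Fin.castLE hmp k) = padVecL n q (B k)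
    rw [pad_row]
    rw [dif_pos (show ((Fin.castLE hmp k : Fin p) : ℕ) < m from k.isLt)]
    congr

lemma rowRank_pad {m n p q : ℕ} (hmp : m ≤ p) (hnq : n ≤ q)
    (B : Matrix (Fin m) (Fin n) D) : rowRank (pad p q B) = rowRank B := by
  unfold rowRank
  rw [span_range_pad hmp]
  exact ((Submodule.equivMapOfInjective _ (padVecL_injective hnq) _).finrank_eq).symm

lemma rowRank_neg {m n : ℕ} (A : Matrix (Fin m) (Fin n) D) :
    rowRank (-A) = rowRank A := by
  unfold rowRank
  have hspan : Submodule.span D (Set.range fun i => (-A) i)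
      = Submodule.span D (Set.range fun i => A i) := by
    apply le_antisymm <;> rw [Submodule.span_le] <;> rintro _ ⟨i, rfl⟩
    · show (-A) i ∈ _
      have : (-A) i = -(A i) := rfl
      rw [this]
      exact Submodule.neg_mem _ (Submodule.subset_span ⟨i, rfl⟩)
    · show A i ∈ _
      have : A i = -((-A) i) := (neg_neg (A i)).symm
      rw [this]
      exact Submodule.neg_mem _ (Submodule.subset_span ⟨i, rfl⟩)
  rw [hspan]

lemma rowRank_eq_of_left_inverse {k : ℕ} {M M' : Matrix (Fin k) (Fin k) D}
    (h : M' * M = 1) : rowRank M = k := by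
  rw [rowRank_eq_finrank_range]
  have hsurj : Function.Surjective M.vecMulLinear := fun w =>
    ⟨w ᵥ* M', by simp [Matrix.vecMul_vecMul, h]⟩
  rw [LinearMap.range_eq_top.mpr hsurj, finrank_top, Module.finrank_fin_fun]

lemma rowRank_add_rowRank_one_sub {k : ℕ} {E : Matrix (Fin k) (Fin k) D}
    (hE : E * E = E) : rowRank E + rowRank (1 - E) = k := by
  rw [rowRank_eq_finrank_range, rowRank_eq_finrank_range]
  have hcompl : IsCompl (LinearMap.range E.vecMulLinear)
      (LinearMap.range (1 - E).vecMulLinear) := by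
    constructor
    · rw [Submodule.disjoint_def]
      intro w hw1 hw2
      obtain ⟨a, ha⟩ := hw1
      obtain ⟨b, hb⟩ := hw2
      simp only [Matrix.vecMulLinear_apply] at ha hb
      have h1 : w ᵥ* E = w := by
        rw [← ha, Matrix.vecMul_vecMul, hE, ha]
      have h2 : w ᵥ* E = 0 := by
        rw [← hb, Matrix.vecMul_vecMul,
          show (1 - E) * E = 0 by rw [sub_mul, one_mul, hE, sub_self],
          Matrix.vecMul_zero]
      rw [← h1, h2]
    · rw [codisjoint_iff, eq_top_iff]
      intro w _
      have : w = w ᵥ* E + w ᵥ* (1 - E) := by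
        rw [← Matrix.vecMul_add, show E + (1 - E) = 1 by abel, Matrix.vecMul_one]
      rw [this]
      exact Submodule.add_mem _
        (Submodule.mem_sup_left ⟨w, rfl⟩)
        (Submodule.mem_sup_right ⟨w, rfl⟩)
  rw [Submodule.finrank_add_eq_of_isCompl hcompl, Module.finrank_fin_fun]

end Aux

/-- Lemma 3.1. The rank `n-1` matrices of `M_{p×q}(D)` adjacent to
`P = [[Iₙ,0],[0,0]]` are exactly those of the form `[[Q₁,0],[0,0]]` with `Q₁` an
`n×n` idempotent of rank `n-1`. -/
theorem stmt2 (n p q : ℕ) (hn : 0 < n) (hnp : n ≤ p) (hnq : n ≤ q)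
    (Q : Matrix (Fin p) (Fin q) D) :
    (rowRank Q = n - 1 ∧ Adjacent Q (pad p q (1 : Matrix (Fin n) (Fin n) D))) ↔
      ∃ Q₁ : Matrix (Fin n) (Fin n) D,
        Q₁ * Q₁ = Q₁ ∧ rowRank Q₁ = n - 1 ∧ Q = pad p q Q₁ := by
  constructor
  · rintro ⟨hQrank, hadj⟩
    set P : Matrix (Fin p) (Fin q) D := pad p q (1 : Matrix (Fin n) (Fin n) D) with hPdef
    have hadj' : rowRank (Q - P) = 1 := hadj
    obtain ⟨x, hx0, u, hux⟩ := exists_vec_of_rowRank_one hadj'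
    have hQ : ∀ i j, Q i j = P i j + u i * x j := by
      intro i j
      have h := congrFun (hux i) j
      simp only [Matrix.sub_apply, Pi.smul_apply, smul_eq_mul] at h
      exact sub_eq_iff_eq_add'.mp h
    have hPe : ∀ (k : Fin n) (j : Fin q),
        P (Fin.castLE hnp k) j = if (j : ℕ) = (k : ℕ) then 1 else 0 := by
      intro k j
      show pad p q (1 : Matrix (Fin n) (Fin n) D) (Fin.castLE hnp k) j = _
      simp only [pad, Matrix.of_apply]
      rw [dif_pos (show ((Fin.castLE hnp k : Fin p) : ℕ) < n from k.isLt)]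
      by_cases hj : (j : ℕ) < n
      · rw [dif_pos hj, Matrix.one_apply]
        simp [Fin.ext_iff, eq_comm]
      · rw [dif_neg hj, if_neg (fun h => hj (by rw [h]; exact k.isLt))]
    have hProw0 : ∀ i : Fin p, n ≤ (i : ℕ) → ∀ j, P i j = 0 := by
      intro i hi j
      show pad p q (1 : Matrix (Fin n) (Fin n) D) i j = 0
      simp only [pad, Matrix.of_apply]
      rw [dif_neg (not_lt.mpr hi)]
    have hPcol0 : ∀ (i : Fin p) (j : Fin q), n ≤ (j : ℕ) → P i j = 0 := by
      intro i j hj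
      show pad p q (1 : Matrix (Fin n) (Fin n) D) i j = 0
      simp only [pad, Matrix.of_apply]
      by_cases hi : (i : ℕ) < n
      · rw [dif_pos hi, dif_neg (not_lt.mpr hj)]
      · rw [dif_neg hi]
    have he : LinearIndependent D (fun k : Fin n => P (Fin.castLE hnp k)) := by
      rw [Fintype.linearIndependent_iff]
      intro g hg i
      have h1 := congrFun hg (Fin.castLE hnq i)
      simp only [Finset.sum_apply, Pi.smul_apply, smul_eq_mul, Pi.zero_apply] at h1
      have h2 : ∀ k : Fin n, g k * P (Fin.castLE hnp k) (Fin.castLE hnq i)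
          = if i = k then g k else 0 := by
        intro k
        rw [hPe]
        by_cases h : i = k
        · rw [if_pos (show ((Fin.castLE hnq i : Fin q) : ℕ) = (k : ℕ) from by rw [h]; rfl),
            if_pos h, mul_one]
        · rw [if_neg (show ¬((Fin.castLE hnq i : Fin q) : ℕ) = ((k : Fin n) : ℕ) from
              fun hh => h (Fin.ext hh)), if_neg h, mul_zero]
      rw [Finset.sum_congr rfl (fun k _ => h2 k), Finset.sum_ite_eq] at h1
      simpa using h1
    haveI : FiniteDimensional D (Submodule.span D (Set.range fun i => Q i)) :=
      FiniteDimensional.span_of_finite D (Set.finite_range _)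
    have hxsupp : ∀ j : Fin q, n ≤ (j : ℕ) → x j = 0 := by
      by_contra hcon
      push_neg at hcon
      obtain ⟨j0, hj0n, hxj0⟩ := hcon
      have hw : LinearIndependent D (fun k : Fin n => Q (Fin.castLE hnp k)) := by
        rw [Fintype.linearIndependent_iff]
        intro g hg
        have hs : (∑ k, g k * u (Fin.castLE hnp k)) = 0 := by
          have h1 := congrFun hg j0
          simp only [Finset.sum_apply, Pi.smul_apply, smul_eq_mul, Pi.zero_apply] at h1
          have h2 : ∀ k : Fin n, g k * Q (Fin.castLE hnp k) j0
              = g k * u (Fin.castLE hnp k) * x j0 := by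
            intro k
            rw [hQ, hPe,
              if_neg (show ¬((j0 : ℕ) = (k : ℕ)) by intro h; have := k.isLt; omega),
              zero_add, ← mul_assoc]
          rw [Finset.sum_congr rfl (fun k _ => h2 k), ← Finset.sum_mul] at h1
          rcases mul_eq_zero.mp h1 with h | h
          · exact h
          · exact absurd h hxj0
        intro i
        have h1 := congrFun hg (Fin.castLE hnq i)
        simp only [Finset.sum_apply, Pi.smul_apply, smul_eq_mul, Pi.zero_apply] at h1
        have h2 : ∀ k : Fin n, g k * Q (Fin.castLE hnp k) (Fin.castLE hnq i)
            = (if i = k then g k else 0)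
              + g k * u (Fin.castLE hnp k) * x (Fin.castLE hnq i) := by
          intro k
          rw [hQ, mul_add, ← mul_assoc]
          congr 1
          rw [hPe]
          by_cases h : i = k
          · rw [if_pos (show ((Fin.castLE hnq i : Fin q) : ℕ) = (k : ℕ) from by rw [h]; rfl),
              if_pos h, mul_one]
          · rw [if_neg (show ¬((Fin.castLE hnq i : Fin q) : ℕ) = ((k : Fin n) : ℕ) from
              fun hh => h (Fin.ext hh)), if_neg h, mul_zero]
        rw [Finset.sum_congr rfl (fun k _ => h2 k), Finset.sum_add_distrib,
          Finset.sum_ite_eq, ← Finset.sum_mul, hs, zero_mul, add_zero] at h1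
        simpa using h1
      have hfr := finrank_span_eq_card (R := D) hw
      have hsub : Submodule.span D (Set.range fun k : Fin n => Q (Fin.castLE hnp k))
          ≤ Submodule.span D (Set.range fun i => Q i) := by
        rw [Submodule.span_le]
        rintro _ ⟨k, rfl⟩
        exact Submodule.subset_span ⟨_, rfl⟩
      have hle := Submodule.finrank_mono hsub
      unfold rowRank at hQrank
      rw [hfr, hQrank, Fintype.card_fin] at hle
      omega
    have husupp : ∀ i : Fin p, n ≤ (i : ℕ) → u i = 0 := by
      by_contra hcon
      push_neg at hcon
      obtain ⟨i0, hi0n, hui0⟩ := hcon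
      have hxmem : x ∈ Submodule.span D (Set.range fun i => Q i) := by
        have hQi0 : Q i0 = u i0 • x := by
          funext j
          rw [hQ, hProw0 i0 hi0n j, zero_add]; rfl
        have hxq : x = (u i0)⁻¹ • Q i0 := by
          rw [hQi0, smul_smul, inv_mul_cancel₀ hui0, one_smul]
        rw [hxq]
        exact Submodule.smul_mem _ _ (Submodule.subset_span ⟨i0, rfl⟩)
      have hemem : ∀ k : Fin n,
          P (Fin.castLE hnp k) ∈ Submodule.span D (Set.range fun i => Q i) := by
        intro k
        have hPQ : P (Fin.castLE hnp k)
            = Q (Fin.castLE hnp k) - u (Fin.castLE hnp k) • x := by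
          funext j
          show P _ j = Q _ j - (u (Fin.castLE hnp k) • x) j
          rw [hQ]
          show P _ j = P _ j + u _ * x j - u _ * x j
          rw [add_sub_cancel_right]
        rw [hPQ]
        exact Submodule.sub_mem _ (Submodule.subset_span ⟨_, rfl⟩)
          (Submodule.smul_mem _ _ hxmem)
      have hfr := finrank_span_eq_card (R := D) he
      have hsub : Submodule.span D (Set.range fun k : Fin n => P (Fin.castLE hnp k))
          ≤ Submodule.span D (Set.range fun i => Q i) := by
        rw [Submodule.span_le]
        rintro _ ⟨k, rfl⟩
        exact hemem k
      have hle := Submodule.finrank_mono hsub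
      unfold rowRank at hQrank
      rw [hfr, hQrank, Fintype.card_fin] at hle
      omega
    set u' : Fin n → D := fun i => u (Fin.castLE hnp i) with hu'
    set x' : Fin n → D := fun j => x (Fin.castLE hnq j) with hx'
    set U : Matrix (Fin n) (Fin 1) D := Matrix.of fun i _ => u' i with hU
    set X : Matrix (Fin 1) (Fin n) D := Matrix.of fun _ j => x' j with hX
    set Q₁ : Matrix (Fin n) (Fin n) D := 1 + U * X with hQ₁def
    have hUX : ∀ i j, (U * X) i j = u' i * x' j := by
      intro i j
      rw [Matrix.mul_apply]
      simp [hU, hX]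
    have hQ₁e : ∀ i j, Q₁ i j = (1 : Matrix (Fin n) (Fin n) D) i j + u' i * x' j := by
      intro i j
      rw [hQ₁def, Matrix.add_apply, hUX]
    have hpadQ : Q = pad p q Q₁ := by
      ext i j
      show Q i j = pad p q Q₁ i j
      simp only [pad, Matrix.of_apply]
      by_cases hi : (i : ℕ) < n
      · by_cases hj : (j : ℕ) < n
        · rw [dif_pos hi, dif_pos hj, hQ₁e, hQ]
          congr 1
          · show pad p q (1 : Matrix (Fin n) (Fin n) D) i j = _
            simp only [pad, Matrix.of_apply]
            rw [dif_pos hi, dif_pos hj]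
        · rw [dif_pos hi, dif_neg hj, hQ, hPcol0 i j (le_of_not_gt hj),
            hxsupp j (le_of_not_gt hj), mul_zero, add_zero]
      · rw [dif_neg hi, hQ, hProw0 i (le_of_not_gt hi) j,
          husupp i (le_of_not_gt hi), zero_mul, add_zero]
    have hQ₁rank : rowRank Q₁ = n - 1 := by
      rw [← rowRank_pad hnp hnq Q₁, ← hpadQ]
      exact hQrank
    set c : D := ∑ j : Fin n, x' j * u' j with hc
    have hXU : X * U = c • (1 : Matrix (Fin 1) (Fin 1) D) := by
      ext i j
      fin_cases i <;> fin_cases j <;>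
        simp [Matrix.mul_apply, hU, hX, hc, Matrix.one_apply]
    have hcneg : c = -1 := by
      by_contra hcne
      have h1c : (1 : D) + c ≠ 0 := fun h => hcne (by rw [add_comm] at h; exact eq_neg_of_add_eq_zero_left h)
      set d : D := (1 + c)⁻¹ with hd
      have hM' : (1 - U * (d • X)) * Q₁ = 1 := by
        have e2 : U * (d • X) * (U * X) = U * ((d * c) • X) := by
          rw [Matrix.mul_assoc, ← Matrix.mul_assoc (d • X) U X, Matrix.smul_mul, hXU,
            smul_smul, Matrix.smul_mul, Matrix.one_mul]
        have e1 : U * (d • X) * (1 + U * X) = U * X := by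
          rw [mul_add, mul_one, e2, ← Matrix.mul_add, ← add_smul,
            show d + d * c = 1 by
              rw [show d + d * c = d * (1 + c) by rw [mul_add, mul_one], hd,
                inv_mul_cancel₀ h1c],
            one_smul]
        rw [hQ₁def]
        calc (1 - U * (d • X)) * (1 + U * X)
            = (1 + U * X) - U * (d • X) * (1 + U * X) := by rw [sub_mul, one_mul]
          _ = (1 + U * X) - U * X := by rw [e1]
          _ = 1 := by rw [add_sub_cancel_right]
      have hfull := rowRank_eq_of_left_inverse hM'
      rw [hQ₁rank] at hfull
      omega
    have hidem : Q₁ * Q₁ = Q₁ := by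
      have hXU' : U * X * (U * X) = -(U * X) := by
        rw [Matrix.mul_assoc U X (U * X), ← Matrix.mul_assoc X U X, hXU,
          Matrix.smul_mul, Matrix.one_mul, hcneg, neg_smul, one_smul, Matrix.mul_neg]
      rw [hQ₁def, add_mul, one_mul, mul_add, mul_one, hXU']
      abel
    exact ⟨Q₁, hidem, hQ₁rank, hpadQ⟩
  · rintro ⟨Q₁, hidem, hrank, rfl⟩
    have hpadsub : pad p q Q₁ - pad p q (1 : Matrix (Fin n) (Fin n) D)
        = pad (D := D) p q (Q₁ - 1) := by
      ext i j
      by_cases hi : (i : ℕ) < n <;> by_cases hj : (j : ℕ) < n <;>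
        simp [pad, Matrix.sub_apply, hi, hj]
    refine ⟨by rw [rowRank_pad hnp hnq]; exact hrank, ?_⟩
    show rowRank _ = 1
    rw [hpadsub, rowRank_pad hnp hnq,
      show Q₁ - 1 = -(1 - Q₁) from (neg_sub _ _).symm, rowRank_neg]
    have hsum := rowRank_add_rowRank_one_sub hidem
    rw [hrank] at hsum
    omega
end

section
/- Let D be a division ring, m, n be positive integers, and A, B ∈ M_{m×n}(D). Assume the rank r of A is greater than 1, and suppose that every rank r−1 matrix of M_{m×n}(D) that is adjacent to A is also adjacent to B. Then either A = B, or B = 0 and r = 2. -/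
open Matrix

variable {D : Type*} [DivisionRing D]

/-!
For `x` in the row space of `A` and a functional `g` with `g x = 1`, the matrix
`C = A - ᵗ(g(Aᵢ))ᵢ x` has rank `r - 1` and is adjacent to `A`, so `E = A - B` satisfies
`rank (E - ᵗ(g(Aᵢ))ᵢ x) = 1` for all such `x` and `g`. Read through the maps `c ↦ c A` and
`c ↦ c E`, this forces `E = A` unless `E = 0`: if `c E ≠ c A = x ≠ 0`, then all the rank-one
ranges are the same line, which has to be the line of `x`, so the row space of `E` lies on that
line; two independent choices of `x` then give `E = 0`. Finally, when `B = 0`, the matrix `C`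
being adjacent to `B` says that `r - 1 = 1`.
-/

open Matrix Module Submodule

section Functional

variable {V : Type*} [AddCommGroup V] [Module D V]

theorem exists_dual_apply_eq_one {x : V} (hx : x ≠ 0) : ∃ g : V →ₗ[D] D, g x = 1 := by
  obtain ⟨h, hhx⟩ := Projective.exists_dual_ne_zero D hx
  exact ⟨h.smulRight (h x)⁻¹, by simp [hhx]⟩

theorem exists_dual_apply_eq_one_and_apply_eq {x y : V} (hx : x ≠ 0) (hy : y ∉ span D {x})
    (t : D) : ∃ g : V →ₗ[D] D, g x = 1 ∧ g y = t := by
  obtain ⟨f, hfy, hfx⟩ := (span D {x}).exists_dual_map_eq_bot_of_notMem hy inferInstance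
  have hfx : f x = 0 := by
    simpa using (Submodule.eq_bot_iff _).mp hfx (f x) (mem_map_of_mem (mem_span_singleton_self x))
  obtain ⟨g₀, hg₀⟩ := exists_dual_apply_eq_one (D := D) hx
  refine ⟨g₀ + f.smulRight ((f y)⁻¹ * (t - g₀ y)), ?_, ?_⟩
  · simp [hfx, hg₀]
  · simp [hfy]

theorem exists_mem_notMem_span_singleton {W : Submodule D V} (hW : 1 < finrank D W) (x : V) :
    ∃ w ∈ W, w ∉ span D {x} := by
  by_contra! hle
  have := Submodule.finrank_mono (show W ≤ span D {x} from hle)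
  have := finrank_span_le_card (R := D) ({x} : Set V)
  rw [Set.toFinset_singleton, Finset.card_singleton] at this
  omega

end Functional

section RankOnePerturbation

variable {U V : Type*} [AddCommGroup U] [Module D U] [AddCommGroup V] [Module D V]

theorem exists_apply_ne_zero_and_apply_ne {π ε : U →ₗ[D] V} (hπ : LinearMap.range π ≠ ⊥)
    (hne : ε ≠ π) : ∃ c, π c ≠ 0 ∧ ε c ≠ π c := by
  obtain ⟨c, hc⟩ := DFunLike.ne_iff.mp hne
  by_cases hc0 : π c = 0
  · obtain ⟨_, ⟨d, rfl⟩, hd⟩ := (Submodule.ne_bot_iff _).mp hπ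
    by_cases hεd : ε d = π d
    · exact ⟨d + c, by simpa [hc0] using hd, by simpa [hεd, hc0] using hc⟩
    · exact ⟨d, hd, hεd⟩
  · exact ⟨c, hc0, hc⟩

variable [FiniteDimensional D V]

theorem finrank_range_sub_smulRight_add_one (π : U →ₗ[D] V) {x : V} (hx : x ∈ LinearMap.range π)
    {g : V →ₗ[D] D} (hg : g x = 1) :
    finrank D (LinearMap.range (π - (g ∘ₗ π).smulRight x)) + 1 = finrank D (LinearMap.range π) := by
  set ψ := π - (g ∘ₗ π).smulRight x
  have hψ : ∀ u, ψ u = π u - g (π u) • x := fun u => rfl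
  have hlt : LinearMap.range ψ < LinearMap.range π := by
    refine SetLike.lt_iff_le_and_exists.mpr ⟨?_, x, hx, ?_⟩
    · rintro _ ⟨u, rfl⟩
      rw [hψ]
      exact sub_mem (LinearMap.mem_range_self π u) (smul_mem _ _ hx)
    · rintro ⟨u, hu⟩
      have := congrArg g hu
      simp [hψ, hg] at this
  have hsup : LinearMap.range π ≤ LinearMap.range ψ ⊔ span D {x} := by
    rintro _ ⟨u, rfl⟩
    exact mem_sup.mpr ⟨ψ u, LinearMap.mem_range_self ψ u, g (π u) • x,
      smul_mem _ _ (mem_span_singleton_self x), by rw [hψ, sub_add_cancel]⟩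
  have hx0 : x ≠ 0 := by rintro rfl; simp at hg
  have := Submodule.finrank_lt_finrank_of_lt hlt
  have := Submodule.finrank_mono hsup
  have := Submodule.finrank_add_le_finrank_add_finrank (LinearMap.range ψ) (span D {x})
  rw [finrank_span_singleton hx0] at this
  omega

variable {π ε : U →ₗ[D] V}

theorem range_le_span_of_finrank_range_sub_smulRight_eq_one
    (hπ : 1 < finrank D (LinearMap.range π)) {c : U} (hc : π c ≠ 0) (hεc : ε c ≠ π c)
    (h : ∀ g : V →ₗ[D] D, g (π c) = 1 →
      finrank D (LinearMap.range (ε - (g ∘ₗ π).smulRight (π c))) = 1) :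
    LinearMap.range ε ≤ span D {π c} := by
  set x := π c
  have hline : ∀ g : V →ₗ[D] D, g x = 1 → ∀ u, ε u - g (π u) • x ∈ span D {ε c - x} := by
    intro g hg u
    have hrange : span D {ε c - x} = LinearMap.range (ε - (g ∘ₗ π).smulRight x) := by
      refine eq_of_le_of_finrank_eq ?_ ?_
      · rw [span_singleton_le_iff_mem]
        exact ⟨c, by simp [x, hg]⟩
      · rw [h g hg, finrank_span_singleton (sub_ne_zero.mpr hεc)]
    rw [hrange]
    exact ⟨u, rfl⟩
  obtain ⟨_, ⟨d, rfl⟩, hd⟩ := exists_mem_notMem_span_singleton hπ x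
  obtain ⟨g₀, hg₀x, hg₀d⟩ := exists_dual_apply_eq_one_and_apply_eq hc hd 0
  obtain ⟨g₁, hg₁x, hg₁d⟩ := exists_dual_apply_eq_one_and_apply_eq hc hd 1
  have hx : x ∈ span D {ε c - x} := by
    simpa [hg₀d, hg₁d] using sub_mem (hline g₀ hg₀x d) (hline g₁ hg₁x d)
  have hspan : span D {ε c - x} = span D {x} := by
    refine (eq_of_le_of_finrank_eq ((span_singleton_le_iff_mem _ _).mpr hx) ?_).symm
    rw [finrank_span_singleton hc, finrank_span_singleton (sub_ne_zero.mpr hεc)]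
  rintro _ ⟨u, rfl⟩
  have := add_mem (hspan ▸ hline g₀ hg₀x u) (smul_mem _ (g₀ (π u)) (mem_span_singleton_self x))
  rwa [sub_add_cancel] at this

theorem eq_of_forall_finrank_range_sub_smulRight_eq_one
    (hπ : 1 < finrank D (LinearMap.range π)) (hε : ε ≠ 0)
    (h : ∀ x ∈ LinearMap.range π, ∀ g : V →ₗ[D] D, g x = 1 →
      finrank D (LinearMap.range (ε - (g ∘ₗ π).smulRight x)) = 1) :
    ε = π := by
  by_contra hne
  have hπ0 : LinearMap.range π ≠ ⊥ := by
    intro hbot; rw [hbot, finrank_bot] at hπ; omega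
  have key : ∀ c, π c ≠ 0 → ε c ≠ π c → LinearMap.range ε ≤ span D {π c} := fun c hc hεc =>
    range_le_span_of_finrank_range_sub_smulRight_eq_one hπ hc hεc
      (h _ (LinearMap.mem_range_self π c))
  obtain ⟨c, hc, hεc⟩ := exists_apply_ne_zero_and_apply_ne hπ0 hne
  obtain ⟨_, ⟨d, rfl⟩, hd⟩ := exists_mem_notMem_span_singleton hπ (π c)
  have hd0 : π d ≠ 0 := fun h0 => hd (h0 ▸ zero_mem _)
  have hεd : ε d ≠ π d := fun h' => hd (h' ▸ key c hc hεc (LinearMap.mem_range_self ε d))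
  have hdisj : Disjoint (span D {π c}) (span D {π d}) := (disjoint_span_singleton' hd0).mpr hd
  apply hε
  rw [← LinearMap.range_eq_bot, eq_bot_iff]
  exact (le_inf (key c hc hεc) (key d hd0 hεd)).trans hdisj.le_bot

end RankOnePerturbation

section RowRank

variable {m n : ℕ}

theorem vecMulLinear_injective :
    Function.Injective fun M : Matrix (Fin m) (Fin n) D => M.vecMulLinear :=
  Matrix.toLinearMapRight'.injective

theorem rowRank_eq_finrank_range_vecMulLinear (M : Matrix (Fin m) (Fin n) D) :
    rowRank M = finrank D (LinearMap.range M.vecMulLinear) := by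
  rw [range_vecMulLinear]; rfl

theorem vecMulLinear_sub_vecMulVec (M N : Matrix (Fin m) (Fin n) D) (g : (Fin n → D) →ₗ[D] D)
    (x : Fin n → D) :
    (N - vecMulVec (fun i => g (M i)) x).vecMulLinear
      = N.vecMulLinear - (g ∘ₗ M.vecMulLinear).smulRight x := by
  refine LinearMap.ext fun c => ?_
  simp only [vecMulLinear_apply, LinearMap.sub_apply, LinearMap.smulRight_apply,
    LinearMap.comp_apply, vecMul_sub, vecMul_vecMulVec]
  rw [vecMul_eq_sum c M, map_sum]
  simp [dotProduct]

variable {A : Matrix (Fin m) (Fin n) D} {x : Fin n → D} {g : (Fin n → D) →ₗ[D] D}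

theorem rowRank_sub_vecMulVec_add_one (hx : x ∈ LinearMap.range A.vecMulLinear) (hg : g x = 1) :
    rowRank (A - vecMulVec (fun i => g (A i)) x) + 1 = rowRank A := by
  rw [rowRank_eq_finrank_range_vecMulLinear, rowRank_eq_finrank_range_vecMulLinear,
    vecMulLinear_sub_vecMulVec]
  exact finrank_range_sub_smulRight_add_one _ hx hg

theorem adjacent_sub_vecMulVec (hx : x ∈ LinearMap.range A.vecMulLinear) (hg : g x = 1) :
    Adjacent (A - vecMulVec (fun i => g (A i)) x) A := by
  obtain ⟨c, rfl⟩ := hx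
  have hgA : g ∘ₗ A.vecMulLinear ≠ 0 := fun h0 =>
    one_ne_zero (hg.symm.trans (LinearMap.congr_fun h0 c))
  rw [Adjacent, sub_sub_cancel_left, ← zero_sub, rowRank_eq_finrank_range_vecMulLinear,
    vecMulLinear_sub_vecMulVec, show (0 : Matrix (Fin m) (Fin n) D).vecMulLinear = 0 from
      LinearMap.ext vecMul_zero, zero_sub, LinearMap.range_neg,
    LinearMap.range_smulRight_apply hgA, finrank_span_singleton]
  intro h0
  simp [h0] at hg

end RowRank

theorem stmt3_general (m n : ℕ)
    (A B : Matrix (Fin m) (Fin n) D) (hr : 1 < rowRank A)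
    (h : ∀ C : Matrix (Fin m) (Fin n) D,
      rowRank C = rowRank A - 1 → Adjacent C A → Adjacent C B) :
    A = B ∨ (B = 0 ∧ rowRank A = 2) := by
  by_cases hAB : A = B
  · exact Or.inl hAB
  set π := A.vecMulLinear
  have hπ : 1 < finrank D (LinearMap.range π) := by
    rwa [← rowRank_eq_finrank_range_vecMulLinear]
  have hε : (A - B).vecMulLinear ≠ 0 := fun h0 =>
    hAB (sub_eq_zero.mp (vecMulLinear_injective (h0.trans (map_zero toLinearMapRight').symm)))
  have hC : ∀ x ∈ LinearMap.range π, ∀ g : (Fin n → D) →ₗ[D] D, g x = 1 →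
      Adjacent (A - vecMulVec (fun i => g (A i)) x) B := fun x hx g hg =>
    h _ (by have := rowRank_sub_vecMulVec_add_one hx hg; omega) (adjacent_sub_vecMulVec hx hg)
  have hB : B = 0 := by
    have hεπ := eq_of_forall_finrank_range_sub_smulRight_eq_one hπ hε fun x hx g hg => by
      have := hC x hx g hg
      rwa [Adjacent, sub_right_comm, rowRank_eq_finrank_range_vecMulLinear,
        vecMulLinear_sub_vecMulVec] at this
    simpa using vecMulLinear_injective hεπ
  obtain ⟨x, hx, hx0⟩ := (Submodule.ne_bot_iff _).mp
    (Submodule.one_le_finrank_iff.mp hπ.le)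
  obtain ⟨g, hg⟩ := exists_dual_apply_eq_one (D := D) hx0
  have h1 := hC x hx g hg
  rw [Adjacent, hB, sub_zero] at h1
  have := rowRank_sub_vecMulVec_add_one hx hg
  exact Or.inr ⟨hB, by omega⟩

/-- Lemma 3.3. If `A` has rank `r > 1` and every rank `r-1` matrix
adjacent to `A` is also adjacent to `B`, then `A = B`, or `B = 0` and `r = 2`. -/
theorem stmt3 (m n : ℕ) (hm : 0 < m) (hn : 0 < n)
    (A B : Matrix (Fin m) (Fin n) D) (hr : 1 < rowRank A)
    (h : ∀ C : Matrix (Fin m) (Fin n) D,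
      rowRank C = rowRank A - 1 → Adjacent C A → Adjacent C B) :
    A = B ∨ (B = 0 ∧ rowRank A = 2) :=
  stmt3_general m n A B hr h
end

section
/- Let D be a division ring, let d be a 1-dimensional subspace of the left vector space D² and e be a 1-dimensional subspace of the right vector space ᵗD². If d ≠ e^⊥ then R_d ∩ L_e ⊆ M_2(D) contains exactly one rank 1 idempotent matrix, and if d = e^⊥ then R_d ∩ L_e contains no rank 1 idempotent. -/
open Matrix

variable {D : Type*} [DivisionRing D]

private lemma gen_of_finrank_one {R M : Type*} [DivisionRing R] [AddCommGroup M] [Module R M]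
    (p : Submodule R M) (hp : Module.finrank R p = 1) :
    ∃ x : M, x ≠ 0 ∧ p = Submodule.span R {x} := by
  rw [finrank_eq_one_iff'] at hp
  obtain ⟨⟨v, hv⟩, hv0, hall⟩ := hp
  refine ⟨v, by simpa [Submodule.mk_eq_zero] using hv0, ?_⟩
  apply le_antisymm
  · intro u hu
    obtain ⟨c, hc⟩ := hall ⟨u, hu⟩
    exact Submodule.mem_span_singleton.mpr ⟨c, by simpa using congrArg Subtype.val hc⟩
  · rw [Submodule.span_le, Set.singleton_subset_iff]; exact hv

private lemma perp_mem_span_aux1 {D : Type*} [DivisionRing D] (x u y : Fin 2 → D) (hx : x ≠ 0)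
    (hy1 : y 1 ≠ 0) (hxy : x 0 * y 0 + x 1 * y 1 = 0) (huy : u 0 * y 0 + u 1 * y 1 = 0) :
    ∃ a : D, a • x = u := by
  by_cases hx0 : x 0 = 0
  · exfalso
    apply hx
    have h1 : x 1 * y 1 = 0 := by simpa [hx0] using hxy
    have h1' : x 1 = 0 := by
      rcases mul_eq_zero.mp h1 with h | h
      · exact h
      · exact absurd h hy1
    funext i; fin_cases i
    · exact hx0
    · exact h1'
  · refine ⟨u 0 * (x 0)⁻¹, ?_⟩
    have key : u 0 * (x 0)⁻¹ * x 1 = u 1 := by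
      apply mul_right_cancel₀ hy1
      have h1 : x 1 * y 1 = -(x 0 * y 0) := eq_neg_of_add_eq_zero_right hxy
      have h2 : u 1 * y 1 = -(u 0 * y 0) := eq_neg_of_add_eq_zero_right huy
      calc u 0 * (x 0)⁻¹ * x 1 * y 1 = u 0 * (x 0)⁻¹ * (x 1 * y 1) := by rw [mul_assoc]
        _ = u 0 * (x 0)⁻¹ * -(x 0 * y 0) := by rw [h1]
        _ = -(u 0 * ((x 0)⁻¹ * x 0) * y 0) := by noncomm_ring
        _ = -(u 0 * y 0) := by rw [inv_mul_cancel₀ hx0, mul_one]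
        _ = u 1 * y 1 := h2.symm
    funext i; fin_cases i
    · show u 0 * (x 0)⁻¹ * x 0 = u 0
      rw [mul_assoc, inv_mul_cancel₀ hx0, mul_one]
    · exact key

private lemma perp_mem_span_aux0 {D : Type*} [DivisionRing D] (x u y : Fin 2 → D) (hx : x ≠ 0)
    (hy0 : y 0 ≠ 0) (hxy : x 0 * y 0 + x 1 * y 1 = 0) (huy : u 0 * y 0 + u 1 * y 1 = 0) :
    ∃ a : D, a • x = u := by
  by_cases hx1 : x 1 = 0
  · exfalso
    apply hx
    have h1 : x 0 * y 0 = 0 := by simpa [hx1] using hxy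
    have h1' : x 0 = 0 := by
      rcases mul_eq_zero.mp h1 with h | h
      · exact h
      · exact absurd h hy0
    funext i; fin_cases i
    · exact h1'
    · exact hx1
  · refine ⟨u 1 * (x 1)⁻¹, ?_⟩
    have key : u 1 * (x 1)⁻¹ * x 0 = u 0 := by
      apply mul_right_cancel₀ hy0
      have h1 : x 0 * y 0 = -(x 1 * y 1) := eq_neg_of_add_eq_zero_left hxy
      have h2 : u 0 * y 0 = -(u 1 * y 1) := eq_neg_of_add_eq_zero_left huy
      calc u 1 * (x 1)⁻¹ * x 0 * y 0 = u 1 * (x 1)⁻¹ * (x 0 * y 0) := by rw [mul_assoc]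
        _ = u 1 * (x 1)⁻¹ * -(x 1 * y 1) := by rw [h1]
        _ = -(u 1 * ((x 1)⁻¹ * x 1) * y 1) := by noncomm_ring
        _ = -(u 1 * y 1) := by rw [inv_mul_cancel₀ hx1, mul_one]
        _ = u 0 * y 0 := h2.symm
    funext i; fin_cases i
    · exact key
    · show u 1 * (x 1)⁻¹ * x 1 = u 1
      rw [mul_assoc, inv_mul_cancel₀ hx1, mul_one]

private lemma rowRank_zero' {m n : ℕ} [NeZero m] :
    rowRank (0 : Matrix (Fin m) (Fin n) D) = 0 := by
  have : (Set.range fun i => (0 : Matrix (Fin m) (Fin n) D) i) = {0} := by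
    ext v
    constructor
    · rintro ⟨i, rfl⟩; rfl
    · rintro rfl; exact ⟨⟨0, Nat.pos_of_ne_zero (NeZero.ne m)⟩, rfl⟩
  rw [rowRank, this, Submodule.span_zero_singleton, finrank_bot]

/-- Lemma 3.5. For 1-dimensional subspaces `d ⊆ D²` (rows) and
`e ⊆ ᵗD²` (columns), `R_d ∩ L_e` contains exactly one rank-1 idempotent if `d ≠ e^⊥`,
and none if `d = e^⊥`. -/
theorem stmt4 (d : Submodule D (Fin 2 → D)) (hd : Module.finrank D d = 1)
    (e : Submodule Dᵐᵒᵖ (Fin 2 → D)) (he : Module.finrank Dᵐᵒᵖ e = 1) :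
    (((d : Set (Fin 2 → D)) ≠ perpSet (e : Set (Fin 2 → D))) →
      ∃! P : Matrix (Fin 2) (Fin 2) D,
        P ∈ Rsub d ∧ P ∈ Lsub e ∧ P * P = P ∧ rowRank P = 1) ∧
    (((d : Set (Fin 2 → D)) = perpSet (e : Set (Fin 2 → D))) →
      ¬ ∃ P : Matrix (Fin 2) (Fin 2) D,
        P ∈ Rsub d ∧ P ∈ Lsub e ∧ P * P = P ∧ rowRank P = 1) := by
  obtain ⟨x, hx0, hdx⟩ := gen_of_finrank_one d hd
  obtain ⟨y, hy0, hey⟩ := gen_of_finrank_one e he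
  set s : D := x 0 * y 0 + x 1 * y 1 with hs_def
  have hy_mem : y ∈ e := by rw [hey]; exact Submodule.mem_span_singleton_self y
  have hx_mem : x ∈ d := by rw [hdx]; exact Submodule.mem_span_singleton_self x
  have hyor : y 0 ≠ 0 ∨ y 1 ≠ 0 := by
    by_contra h
    push_neg at h
    exact hy0 (funext fun i => by fin_cases i <;> simp [h.1, h.2])
  -- characterization of the rank-1 idempotents in Rsub d ∩ Lsub e
  have hmem : ∀ P : Matrix (Fin 2) (Fin 2) D,
      P ∈ Rsub d → P ∈ Lsub e → P * P = P → rowRank P = 1 →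
      s ≠ 0 ∧ ∀ i j, P i j = y i * s⁻¹ * x j := by
    intro P hR hL hPP hr
    have hR' : ∀ i, P i ∈ d := hR
    have hL' : ∀ j, (fun i => P i j) ∈ e := hL
    have hrow : ∀ i, ∃ a : D, ∀ j, P i j = a * x j := by
      intro i
      have hm : P i ∈ Submodule.span D {x} := by rw [← hdx]; exact hR' i
      obtain ⟨a, ha⟩ := Submodule.mem_span_singleton.mp hm
      exact ⟨a, fun j => by rw [← ha]; rfl⟩
    choose a ha using hrow
    have hcol : ∀ j, ∃ b : D, ∀ i, P i j = y i * b := by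
      intro j
      have hm : (fun i => P i j) ∈ Submodule.span Dᵐᵒᵖ {y} := by rw [← hey]; exact hL' j
      obtain ⟨c, hc⟩ := Submodule.mem_span_singleton.mp hm
      exact ⟨c.unop, fun i => by rw [show P i j = (c • y) i from (congrFun hc i).symm]; rfl⟩
    choose b hb using hcol
    have hP0 : P ≠ 0 := by
      rintro rfl
      rw [rowRank_zero'] at hr
      exact zero_ne_one hr
    obtain ⟨i0, j0, hPij⟩ : ∃ i j, P i j ≠ 0 := by
      by_contra h
      push_neg at h
      exact hP0 (by ext i j; simp [h])
    have hai0 : a i0 ≠ 0 := left_ne_zero_of_mul (ha i0 j0 ▸ hPij)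
    have hxj0 : x j0 ≠ 0 := right_ne_zero_of_mul (ha i0 j0 ▸ hPij)
    have hyi0 : y i0 ≠ 0 := left_ne_zero_of_mul (hb j0 i0 ▸ hPij)
    set t : D := b 0 * a 0 + b 1 * a 1 with ht_def
    have hPt : ∀ i j, P i j = y i * (t * x j) := by
      intro i j
      have h := congrFun (congrFun hPP i) j
      rw [Matrix.mul_apply, Fin.sum_univ_two, hb 0 i, hb 1 i, ha 0 j, ha 1 j] at h
      rw [← h, ht_def]
      noncomm_ring
    have ht0 : t ≠ 0 :=
      left_ne_zero_of_mul (right_ne_zero_of_mul (hPt i0 j0 ▸ hPij))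
    have hPP2 : (P * P) i0 j0 = y i0 * (t * (s * (t * x j0))) := by
      rw [Matrix.mul_apply, Fin.sum_univ_two, hPt i0 0, hPt 0 j0, hPt i0 1, hPt 1 j0, hs_def]
      noncomm_ring
    have h3 : y i0 * (t * x j0) = y i0 * (t * (s * (t * x j0))) := by
      rw [← hPt i0 j0, ← hPP2, hPP]
    have h5 : x j0 = s * (t * x j0) := mul_left_cancel₀ ht0 (mul_left_cancel₀ hyi0 h3)
    have hst : s * t = 1 := by
      apply mul_right_cancel₀ hxj0
      rw [one_mul, mul_assoc]
      exact h5.symm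
    have hsne : s ≠ 0 := left_ne_zero_of_mul_eq_one hst
    have htinv : s⁻¹ = t := inv_eq_of_mul_eq_one_right hst
    refine ⟨hsne, fun i j => ?_⟩
    rw [hPt i j, htinv, mul_assoc]
  -- d = e^⊥ implies s = 0
  have hdp_s : (d : Set (Fin 2 → D)) = perpSet (e : Set (Fin 2 → D)) → s = 0 := by
    intro h
    have hxp : x ∈ perpSet (e : Set (Fin 2 → D)) := by rw [← h]; exact hx_mem
    have := hxp y hy_mem
    rw [Fin.sum_univ_two] at this
    rw [hs_def]; exact this
  -- s = 0 implies d = e^⊥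
  have hsp : s = 0 → (d : Set (Fin 2 → D)) = perpSet (e : Set (Fin 2 → D)) := by
    intro hs
    ext u
    constructor
    · intro hu v hv
      have hu' : u ∈ Submodule.span D {x} := by rw [← hdx]; exact hu
      obtain ⟨c, hc⟩ := Submodule.mem_span_singleton.mp hu'
      have hv' : v ∈ Submodule.span Dᵐᵒᵖ {y} := by rw [← hey]; exact hv
      obtain ⟨m, hm⟩ := Submodule.mem_span_singleton.mp hv'
      have hcalc : ∑ i, u i * v i = c * (s * m.unop) := by
        rw [Fin.sum_univ_two, ← hc, ← hm, hs_def]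
        show c * x 0 * (y 0 * m.unop) + c * x 1 * (y 1 * m.unop)
            = c * ((x 0 * y 0 + x 1 * y 1) * m.unop)
        noncomm_ring
      rw [hcalc, hs, zero_mul, mul_zero]
    · intro hu
      have huy := hu y hy_mem
      rw [Fin.sum_univ_two] at huy
      have hxy : x 0 * y 0 + x 1 * y 1 = 0 := by rw [← hs_def]; exact hs
      have : ∃ a : D, a • x = u := by
        rcases hyor with hgood | hgood
        · exact perp_mem_span_aux0 x u y hx0 hgood hxy huy
        · exact perp_mem_span_aux1 x u y hx0 hgood hxy huy
      show u ∈ d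
      rw [hdx]
      exact Submodule.mem_span_singleton.mpr this
  constructor
  · intro hne
    have hsne : s ≠ 0 := fun h => hne (hsp h)
    refine ⟨Matrix.of fun i j => y i * s⁻¹ * x j, ⟨?_, ?_, ?_, ?_⟩, ?_⟩
    · -- Rsub
      intro i
      rw [hdx]
      exact Submodule.mem_span_singleton.mpr ⟨y i * s⁻¹, rfl⟩
    · -- Lsub
      intro j
      rw [hey]
      refine Submodule.mem_span_singleton.mpr ⟨MulOpposite.op (s⁻¹ * x j), ?_⟩
      funext i
      show y i * (s⁻¹ * x j) = y i * s⁻¹ * x j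
      rw [mul_assoc]
    · -- idempotent
      ext i j
      rw [Matrix.mul_apply, Fin.sum_univ_two]
      show (y i * s⁻¹ * x 0) * (y 0 * s⁻¹ * x j) + (y i * s⁻¹ * x 1) * (y 1 * s⁻¹ * x j)
          = y i * s⁻¹ * x j
      have h1 : (y i * s⁻¹ * x 0) * (y 0 * s⁻¹ * x j) + (y i * s⁻¹ * x 1) * (y 1 * s⁻¹ * x j)
          = y i * s⁻¹ * ((x 0 * y 0 + x 1 * y 1) * (s⁻¹ * x j)) := by noncomm_ring
      rw [h1, ← hs_def, show s * (s⁻¹ * x j) = x j from by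
        rw [← mul_assoc, mul_inv_cancel₀ hsne, one_mul]]
    · -- rowRank = 1
      have hrows : Submodule.span D
          (Set.range fun i => (Matrix.of fun i j => y i * s⁻¹ * x j : Matrix (Fin 2) (Fin 2) D) i)
          = Submodule.span D {x} := by
        apply le_antisymm
        · rw [Submodule.span_le]
          rintro _ ⟨i, rfl⟩
          exact Submodule.mem_span_singleton.mpr ⟨y i * s⁻¹, rfl⟩
        · rw [Submodule.span_le, Set.singleton_subset_iff]
          obtain ⟨i0, hyi0⟩ : ∃ i0, y i0 ≠ 0 := by
            rcases hyor with h | h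
            exacts [⟨0, h⟩, ⟨1, h⟩]
          have hc0 : y i0 * s⁻¹ ≠ 0 := mul_ne_zero hyi0 (inv_ne_zero hsne)
          have hxeq : x = (y i0 * s⁻¹)⁻¹ •
              (Matrix.of fun i j => y i * s⁻¹ * x j : Matrix (Fin 2) (Fin 2) D) i0 := by
            funext j
            show x j = (y i0 * s⁻¹)⁻¹ * (y i0 * s⁻¹ * x j)
            rw [← mul_assoc, inv_mul_cancel₀ hc0, one_mul]
          have hmem2 := Submodule.smul_mem
            (Submodule.span D (Set.range fun i =>
              (Matrix.of fun i j => y i * s⁻¹ * x j : Matrix (Fin 2) (Fin 2) D) i))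
            ((y i0 * s⁻¹)⁻¹) (Submodule.subset_span ⟨i0, rfl⟩)
          rwa [← hxeq] at hmem2
      rw [rowRank, hrows]
      exact finrank_span_singleton hx0
    · -- uniqueness
      rintro Q ⟨hQ1, hQ2, hQ3, hQ4⟩
      obtain ⟨-, hQ⟩ := hmem Q hQ1 hQ2 hQ3 hQ4
      ext i j
      exact hQ i j
  · rintro heq ⟨P, h1, h2, h3, h4⟩
    exact (hmem P h1 h2 h3 h4).1 (hdp_s heq)
end
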